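/- arXiv:nlin/0401025 — 3 statements merged into one kernel-verified Lean document; each statement's English description precedes it below -/
import Mathlib

section
/- Let n ≥ 1, let L₂ be a fixed invertible real n×n matrix, and let L₁, M : ℝ → Mat(n,ℝ) be differentiable matrix-valued functions. Then L₁ satisfies the Lax triad L₁'(t) = L₁(t)·M(t)·L₂ - L₂·M(t)·L₁(t) for all t if and only if the function L_y(t) := L₂⁻¹·L₁(t) satisfies the Lax equation L_y'(t) = L_y(t)·M_y(t) - M_y(t)·L_y(t) for all t, where M_y(t) = M(t)·L₂. -/
/-!
STATEMENT 5: with L₂ a constant invertible matrix, L₁ satisfies the Lax triad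
L₁' = L₁·M·L₂ - L₂·M·L₁ if and only if L_y = L₂⁻¹·L₁ satisfies the Lax
equation L_y' = L_y·M_y - M_y·L_y with M_y = M·L₂.  Differentiation of
matrix-valued functions is entrywise.
-/

open Matrix

theorem lax_triad_iff_lax_equation (n : ℕ) (hn : 1 ≤ n)
    (L₂ : Matrix (Fin n) (Fin n) ℝ) (hL₂ : IsUnit L₂)
    (L₁ M : ℝ → Matrix (Fin n) (Fin n) ℝ)
    (hL₁ : ∀ i j, Differentiable ℝ fun t => L₁ t i j)
    (hM : ∀ i j, Differentiable ℝ fun t => M t i j) :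
    (∀ t (i j : Fin n), deriv (fun s => L₁ s i j) t =
        (L₁ t * M t * L₂ - L₂ * M t * L₁ t) i j) ↔
    (∀ t (i j : Fin n), deriv (fun s => (L₂⁻¹ * L₁ s) i j) t =
        ((L₂⁻¹ * L₁ t) * (M t * L₂) - (M t * L₂) * (L₂⁻¹ * L₁ t)) i j) := by
  have hinv : L₂⁻¹ * L₂ = 1 := nonsing_inv_mul _ (((isUnit_iff_isUnit_det L₂).mp hL₂))
  have hinv' : L₂ * L₂⁻¹ = 1 := mul_nonsing_inv _ (((isUnit_iff_isUnit_det L₂).mp hL₂))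
  -- derivative of L₂⁻¹ * L₁ entrywise
  have key : ∀ t (i j : Fin n), deriv (fun s => (L₂⁻¹ * L₁ s) i j) t =
      ∑ k, L₂⁻¹ i k * deriv (fun s => L₁ s k j) t := by
    intro t i j
    have : (fun s => (L₂⁻¹ * L₁ s) i j) = fun s => ∑ k, L₂⁻¹ i k * L₁ s k j := by
      funext s; simp [Matrix.mul_apply]
    rw [this, deriv_fun_sum]
    · exact Finset.sum_congr rfl fun k _ => deriv_const_mul _ ((hL₁ k j).differentiableAt)
    · intro k _
      exact ((hL₁ k j).differentiableAt).const_mul _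
  constructor
  · intro h t i j
    rw [key]
    have hmat : (Matrix.of fun i j => deriv (fun s => L₁ s i j) t)
        = L₁ t * M t * L₂ - L₂ * M t * L₁ t := by
      ext i j; exact h t i j
    have : (∑ k, L₂⁻¹ i k * deriv (fun s => L₁ s k j) t)
        = (L₂⁻¹ * (L₁ t * M t * L₂ - L₂ * M t * L₁ t)) i j := by
      rw [Matrix.mul_apply]
      refine Finset.sum_congr rfl fun k _ => ?_
      rw [show deriv (fun s => L₁ s k j) t
          = (L₁ t * M t * L₂ - L₂ * M t * L₁ t) k j from congrFun (congrFun hmat k) j]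
    rw [this]
    have : L₂⁻¹ * (L₁ t * M t * L₂ - L₂ * M t * L₁ t)
        = (L₂⁻¹ * L₁ t) * (M t * L₂) - (M t * L₂) * (L₂⁻¹ * L₁ t) := by
      rw [Matrix.mul_sub]
      congr 1
      · noncomm_ring
      · rw [show L₂⁻¹ * (L₂ * M t * L₁ t) = (L₂⁻¹ * L₂) * (M t * L₁ t) by noncomm_ring,
          hinv, one_mul]
        rw [show M t * L₂ * (L₂⁻¹ * L₁ t) = M t * (L₂ * L₂⁻¹) * L₁ t by noncomm_ring,
          hinv', mul_one]
    rw [this]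
  · intro h t i j
    have hmat : (Matrix.of fun i j => ∑ k, L₂⁻¹ i k * deriv (fun s => L₁ s k j) t)
        = (L₂⁻¹ * L₁ t) * (M t * L₂) - (M t * L₂) * (L₂⁻¹ * L₁ t) := by
      ext i j
      simp only [Matrix.of_apply]
      rw [← key]; exact h t i j
    have hmat' : L₂⁻¹ * (Matrix.of fun i j => deriv (fun s => L₁ s i j) t)
        = (L₂⁻¹ * L₁ t) * (M t * L₂) - (M t * L₂) * (L₂⁻¹ * L₁ t) := by
      rw [← hmat]; ext i j
      simp [Matrix.mul_apply]
    have h2 := congrArg (fun A => L₂ * A) hmat'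
    rw [← Matrix.mul_assoc, hinv', Matrix.one_mul] at h2
    have e1 : L₂ * (L₂⁻¹ * L₁ t * (M t * L₂)) = L₁ t * M t * L₂ := by
      simp only [← Matrix.mul_assoc]; rw [hinv', Matrix.one_mul]
    have e2 : L₂ * (M t * L₂ * (L₂⁻¹ * L₁ t)) = L₂ * M t * L₁ t := by
      simp only [← Matrix.mul_assoc]
      rw [Matrix.mul_assoc (L₂ * M t) L₂ L₂⁻¹, hinv', Matrix.mul_one]
    rw [Matrix.mul_sub, e1, e2] at h2
    exact congrFun (congrFun h2 i) j
end

section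
/- Let a₁, a₂, a₃, b₁, b₂, b₃ be real numbers with a₁², a₂², a₃² pairwise distinct. Define α₁ = (a₂b₂ - a₃b₃)/(a₂² - a₃²), α₂ = (a₃b₃ - a₁b₁)/(a₃² - a₁²), α₃ = (a₁b₁ - a₂b₂)/(a₁² - a₂²), and β₁ = (a₂b₃ - a₃b₂)/(a₂² - a₃²), β₂ = (a₃b₁ - a₁b₃)/(a₃² - a₁²), β₃ = (a₁b₂ - a₂b₁)/(a₁² - a₂²). Then (α₁ - α₂)β₃² + (α₂ - α₃)β₁² + (α₃ - α₁)β₂² + (α₁ - α₂)(α₂ - α₃)(α₃ - α₁) = 0. -/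
/-!
STATEMENT 13: the Steklov–Manakov relation among the coefficients
α_k = (a_ib_i - a_jb_j)/(a_i² - a_j²) and β_k = (a_ib_j - a_jb_i)/(a_i² - a_j²).
-/

theorem steklov_manakov_relation (a₁ a₂ a₃ b₁ b₂ b₃ : ℝ)
    (h12 : a₁ ^ 2 ≠ a₂ ^ 2) (h23 : a₂ ^ 2 ≠ a₃ ^ 2) (h31 : a₃ ^ 2 ≠ a₁ ^ 2) :
    let α₁ := (a₂ * b₂ - a₃ * b₃) / (a₂ ^ 2 - a₃ ^ 2)
    let α₂ := (a₃ * b₃ - a₁ * b₁) / (a₃ ^ 2 - a₁ ^ 2)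
    let α₃ := (a₁ * b₁ - a₂ * b₂) / (a₁ ^ 2 - a₂ ^ 2)
    let β₁ := (a₂ * b₃ - a₃ * b₂) / (a₂ ^ 2 - a₃ ^ 2)
    let β₂ := (a₃ * b₁ - a₁ * b₃) / (a₃ ^ 2 - a₁ ^ 2)
    let β₃ := (a₁ * b₂ - a₂ * b₁) / (a₁ ^ 2 - a₂ ^ 2)
    (α₁ - α₂) * β₃ ^ 2 + (α₂ - α₃) * β₁ ^ 2 + (α₃ - α₁) * β₂ ^ 2
      + (α₁ - α₂) * (α₂ - α₃) * (α₃ - α₁) = 0 := by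
  intro α₁ α₂ α₃ β₁ β₂ β₃
  have h12' : a₁ ^ 2 - a₂ ^ 2 ≠ 0 := sub_ne_zero.mpr h12
  have h23' : a₂ ^ 2 - a₃ ^ 2 ≠ 0 := sub_ne_zero.mpr h23
  have h31' : a₃ ^ 2 - a₁ ^ 2 ≠ 0 := sub_ne_zero.mpr h31
  simp only [α₁, α₂, α₃, β₁, β₂, β₃]
  field_simp
  ring
end

section
/- Let g be a Lie algebra over ℝ and let g₊, g₋ ⊆ g be Lie subalgebras such that g = g₊ ⊕ g₋ as a vector space. Let P₊, P₋ denote the projections onto g₊ and g₋ along the complementary subalgebra, and set R = P₊ - P₋. Then the bilinear operation [X, Y]_R := ½([RX, Y] + [X, RY]) is antisymmetric and satisfies the Jacobi identity, i.e. it defines a second Lie bracket on g. -/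
/-!
STATEMENT 15: for a real Lie algebra g = g₊ ⊕ g₋ (direct sum of two Lie
subalgebras as a vector space), the operator R = P₊ - P₋ built from the
projections onto g₊ and g₋ defines a second Lie bracket
[X,Y]_R = ½([RX,Y] + [X,RY]): it is antisymmetric and satisfies Jacobi.
-/

/-- The candidate R-bracket [X,Y]_R = ½([RX,Y] + [X,RY]). -/
noncomputable def rBracket {g : Type*} [LieRing g] [LieAlgebra ℝ g] (R : g →ₗ[ℝ] g)
    (X Y : g) : g :=
  (1 / 2 : ℝ) • (⁅R X, Y⁆ + ⁅X, R Y⁆)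

theorem r_matrix_second_lie_bracket
    (g : Type*) [LieRing g] [LieAlgebra ℝ g]
    (gp gm : LieSubalgebra ℝ g)
    (hcompl : IsCompl gp.toSubmodule gm.toSubmodule)
    (Pp Pm : g →ₗ[ℝ] g)
    (hPp : ∀ X, Pp X ∈ gp) (hPm : ∀ X, Pm X ∈ gm)
    (hsum : ∀ X, Pp X + Pm X = X)
    (R : g →ₗ[ℝ] g) (hR : R = Pp - Pm) :
    (∀ X Y : g, rBracket R X Y = -rBracket R Y X) ∧
    (∀ X Y Z : g,
      rBracket R (rBracket R X Y) Z + rBracket R (rBracket R Y Z) X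
        + rBracket R (rBracket R Z X) Y = 0) := by
  -- uniqueness of the decomposition
  have huniq : ∀ a b : g, a ∈ gp → b ∈ gm → Pp (a + b) = a ∧ Pm (a + b) = b := by
    intro a b ha hb
    have h1 : Pp (a + b) + Pm (a + b) = a + b := hsum _
    have hz : Pp (a + b) - a = b - Pm (a + b) := by
      rw [sub_eq_sub_iff_add_eq_add, h1, add_comm]
    have hmem1 : Pp (a + b) - a ∈ gp.toSubmodule := sub_mem (hPp _) ha
    have hmem2 : Pp (a + b) - a ∈ gm.toSubmodule := hz ▸ sub_mem hb (hPm _)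
    have h0 : Pp (a + b) - a = 0 :=
      (Submodule.disjoint_def.mp hcompl.disjoint) _ hmem1 hmem2
    have hp : Pp (a + b) = a := sub_eq_zero.mp h0
    have hm : Pm (a + b) = b := by
      have : b - Pm (a + b) = 0 := hz ▸ h0
      exact (sub_eq_zero.mp this).symm
    exact ⟨hp, hm⟩
  -- the key formula for the R-bracket
  have hkey : ∀ X Y : g, rBracket R X Y = ⁅Pp X, Pp Y⁆ - ⁅Pm X, Pm Y⁆ := by
    intro X Y
    set a := Pp X with ha
    set b := Pm X with hb
    set c := Pp Y with hc
    set d := Pm Y with hd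
    have hX : a + b = X := hsum X
    have hY : c + d = Y := hsum Y
    rw [rBracket, hR]
    simp only [LinearMap.sub_apply, ← ha, ← hb, ← hc, ← hd]
    rw [← hX, ← hY]
    have e : ⁅a - b, c + d⁆ + ⁅a + b, c - d⁆ = (2 : ℝ) • (⁅a, c⁆ - ⁅b, d⁆) := by
      simp only [lie_add, add_lie, lie_sub, sub_lie, two_smul]
      abel
    rw [e, smul_smul]
    norm_num
  -- projections of the R-bracket
  have hproj : ∀ X Y : g, Pp (rBracket R X Y) = ⁅Pp X, Pp Y⁆ ∧
      Pm (rBracket R X Y) = -⁅Pm X, Pm Y⁆ := by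
    intro X Y
    have := huniq ⁅Pp X, Pp Y⁆ (-⁅Pm X, Pm Y⁆)
      (gp.lie_mem (hPp X) (hPp Y)) (neg_mem (gm.lie_mem (hPm X) (hPm Y)))
    rw [← sub_eq_add_neg, ← hkey] at this
    exact this
  constructor
  · intro X Y
    rw [hkey, hkey,
      show ⁅Pp Y, Pp X⁆ = -⁅Pp X, Pp Y⁆ from (lie_skew _ _).symm,
      show ⁅Pm Y, Pm X⁆ = -⁅Pm X, Pm Y⁆ from (lie_skew _ _).symm]
    abel
  · intro X Y Z
    rw [hkey (rBracket R X Y) Z, hkey (rBracket R Y Z) X, hkey (rBracket R Z X) Y,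
      (hproj X Y).1, (hproj X Y).2, (hproj Y Z).1, (hproj Y Z).2,
      (hproj Z X).1, (hproj Z X).2]
    simp only [neg_lie, sub_neg_eq_add]
    rw [show ⁅⁅Pp X, Pp Y⁆, Pp Z⁆ = -⁅Pp Z, ⁅Pp X, Pp Y⁆⁆ from (lie_skew _ _).symm,
      show ⁅⁅Pm X, Pm Y⁆, Pm Z⁆ = -⁅Pm Z, ⁅Pm X, Pm Y⁆⁆ from (lie_skew _ _).symm,
      show ⁅⁅Pp Y, Pp Z⁆, Pp X⁆ = -⁅Pp X, ⁅Pp Y, Pp Z⁆⁆ from (lie_skew _ _).symm,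
      show ⁅⁅Pm Y, Pm Z⁆, Pm X⁆ = -⁅Pm X, ⁅Pm Y, Pm Z⁆⁆ from (lie_skew _ _).symm,
      show ⁅⁅Pp Z, Pp X⁆, Pp Y⁆ = -⁅Pp Y, ⁅Pp Z, Pp X⁆⁆ from (lie_skew _ _).symm,
      show ⁅⁅Pm Z, Pm X⁆, Pm Y⁆ = -⁅Pm Y, ⁅Pm Z, Pm X⁆⁆ from (lie_skew _ _).symm]
    have jp := lie_jacobi (Pp X) (Pp Y) (Pp Z)
    have jm := lie_jacobi (Pm X) (Pm Y) (Pm Z)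
    calc -⁅Pp Z, ⁅Pp X, Pp Y⁆⁆ + -⁅Pm Z, ⁅Pm X, Pm Y⁆⁆
          + (-⁅Pp X, ⁅Pp Y, Pp Z⁆⁆ + -⁅Pm X, ⁅Pm Y, Pm Z⁆⁆)
          + (-⁅Pp Y, ⁅Pp Z, Pp X⁆⁆ + -⁅Pm Y, ⁅Pm Z, Pm X⁆⁆)
        = -((⁅Pp X, ⁅Pp Y, Pp Z⁆⁆ + ⁅Pp Y, ⁅Pp Z, Pp X⁆⁆ + ⁅Pp Z, ⁅Pp X, Pp Y⁆⁆)
            + (⁅Pm X, ⁅Pm Y, Pm Z⁆⁆ + ⁅Pm Y, ⁅Pm Z, Pm X⁆⁆ + ⁅Pm Z, ⁅Pm X, Pm Y⁆⁆)) := by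
          abel
      _ = 0 := by rw [jp, jm]; simp
end
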